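/- Let a > 0 and β > 0, define errfn(z) := (1/(2π)) ∫_{-∞}^z e^{-ξ²} dξ and e_{a,β}(y,t) := errfn((y + a t)/√(4βt)) - errfn((y - a t)/√(4βt)). Then there exist C > 0 and M > 0 such that for all y ≤ 0 and all t ≥ 1, |∂_t ∂_y e_{a,β}(y,t)| ≤ C t^{-1} exp(-(y + a t)²/(M t)). -/

import Mathlib

open MeasureTheory Real Set Filter Topology

/-!
Up to the factor `1 / (2π)`, `∂_y e(y, t)` is the difference of the Gaussian profiles
`g(x, t) = e^{-x²/(4βt)} / √(4βt)` at `x = y + at` and `x = y - at`. Along a ray `x = y + ct`,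
with `v = x / √(4βt)`,
`d/dt g(x, t) = t⁻¹ e^{-v²} ((v² - 1/2) / √(4βt) - c v / (2β))`,
and `(1 + v²) e^{-v²} ≤ 2 e^{-v²/2}` bounds this by a multiple of `t⁻¹ e^{-x²/(8βt)}` for `t ≥ 1`.
For `y ≤ 0` we have `|y - at| ≥ |y + at|`, so both profiles decay at least like `e^{-(y+at)²/(8βt)}`.
-/

noncomputable def errfn (z : ℝ) : ℝ := (1 / (2 * Real.pi)) * ∫ ξ in Iic z, Real.exp (-ξ^2)

noncomputable def eKernel (a β y t : ℝ) : ℝ :=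
  errfn ((y + a * t) / Real.sqrt (4 * β * t)) - errfn ((y - a * t) / Real.sqrt (4 * β * t))

theorem hasDerivAt_errfn (z : ℝ) : HasDerivAt errfn (1 / (2 * π) * exp (-z ^ 2)) z := by
  have hint : Integrable fun ξ : ℝ => exp (-ξ ^ 2) := by
    simpa using integrable_exp_neg_mul_sq one_pos
  have hsplit : errfn = fun w => 1 / (2 * π) *
      ((∫ ξ in Iic 0, exp (-ξ ^ 2)) + ∫ ξ in (0 : ℝ)..w, exp (-ξ ^ 2)) := by
    ext w
    rw [errfn, ← intervalIntegral.integral_Iic_sub_Iic hint.integrableOn hint.integrableOn]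
    ring
  rw [hsplit]
  refine ((intervalIntegral.integral_hasDerivAt_right hint.intervalIntegrable
    hint.aestronglyMeasurable.stronglyMeasurableAtFilter (by fun_prop)).const_add _).const_mul _

noncomputable def gaussProfile (β x t : ℝ) : ℝ := exp (-(x ^ 2 / (4 * β * t))) / √(4 * β * t)

theorem hasDerivAt_errfn_div_sqrt {β t : ℝ} (hβ : 0 < β) (ht : 0 < t) (c x : ℝ) :
    HasDerivAt (fun y => errfn ((y + c) / √(4 * β * t)))
      (1 / (2 * π) * gaussProfile β (x + c) t) x := by
  have hs : √(4 * β * t) ^ 2 = 4 * β * t := sq_sqrt (by positivity)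
  refine ((hasDerivAt_errfn _).comp x
    (((hasDerivAt_id x).add_const c).div_const (√(4 * β * t)))).congr_deriv ?_
  rw [gaussProfile, div_pow, hs, id]
  ring

theorem deriv_eKernel_eq_gaussProfile {a β t : ℝ} (hβ : 0 < β) (ht : 0 < t) (y : ℝ) :
    deriv (fun y' => eKernel a β y' t) y =
      1 / (2 * π) * (gaussProfile β (y + a * t) t - gaussProfile β (y + -a * t) t) := by
  have h := (hasDerivAt_errfn_div_sqrt hβ ht (a * t) y).sub
    (hasDerivAt_errfn_div_sqrt hβ ht (-a * t) y)
  rw [← mul_sub] at h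
  refine Eq.trans (congrArg (deriv · y) (funext fun y' => ?_)) h.deriv
  simp only [eKernel, Pi.sub_apply, neg_mul, ← sub_eq_add_neg]

theorem hasDerivAt_gaussProfile_comp {β t : ℝ} (hβ : 0 < β) (ht : 0 < t) (y c : ℝ) :
    HasDerivAt (fun t => gaussProfile β (y + c * t) t)
      (gaussProfile β (y + c * t) t *
        ((y + c * t) ^ 2 / (4 * β * t ^ 2) - c * (y + c * t) / (2 * β * t) - 1 / (2 * t))) t := by
  have hr : 0 < 4 * β * t := by positivity
  have hs : 0 < √(4 * β * t) := sqrt_pos.2 hr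
  have hlin : HasDerivAt (fun t => 4 * β * t) (4 * β) t := by
    simpa using (hasDerivAt_id t).const_mul (4 * β)
  have hw : HasDerivAt (fun t => y + c * t) c t := by
    simpa using ((hasDerivAt_id t).const_mul c).const_add y
  have hq : HasDerivAt (fun t => (y + c * t) ^ 2 / (4 * β * t))
      ((2 * (y + c * t) ^ 1 * c * (4 * β * t) - (y + c * t) ^ 2 * (4 * β)) / (4 * β * t) ^ 2) t :=
    (hw.pow 2).div hlin hr.ne'
  have hsq : HasDerivAt (fun t => √(4 * β * t)) (1 / (2 * √(4 * β * t)) * (4 * β)) t :=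
    (hasDerivAt_sqrt hr.ne').comp t hlin
  refine (hq.neg.exp.div hsq hs.ne').congr_deriv ?_
  have hs2 : √(4 * β * t) ^ 2 = 4 * β * t := sq_sqrt hr.le
  simp only [gaussProfile, Pi.neg_apply]
  generalize √(4 * β * t) = s at hs hs2 ⊢
  field_simp
  rw [hs2]
  ring

theorem one_add_mul_exp_neg_le (x : ℝ) : (1 + x) * exp (-x) ≤ 2 * exp (-(x / 2)) := by
  have hx : 1 + x ≤ 2 * exp (x / 2) := by linarith [add_one_le_exp (x / 2)]
  calc (1 + x) * exp (-x) ≤ 2 * exp (x / 2) * exp (-x) := by gcongr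
    _ = 2 * exp (-(x / 2)) := by rw [mul_assoc, ← exp_add]; ring_nf

theorem abs_deriv_gaussProfile_comp_le {β t : ℝ} (hβ : 0 < β) (ht : 1 ≤ t) (y c : ℝ) :
    |deriv (fun t => gaussProfile β (y + c * t) t) t| ≤
      (1 / √β + |c| / (2 * β)) * t⁻¹ * exp (-((y + c * t) ^ 2 / (8 * β * t))) := by
  have ht0 : 0 < t := one_pos.trans_le ht
  rw [(hasDerivAt_gaussProfile_comp hβ ht0 y c).deriv]
  set w := y + c * t
  have hr : 0 < 4 * β * t := by positivity
  set s := √(4 * β * t) with hs_def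
  have hs2 : s ^ 2 = 4 * β * t := sq_sqrt hr.le
  have hs : 2 * √β ≤ s := by
    rw [hs_def, show 4 * β * t = 2 ^ 2 * β * t by ring, sqrt_mul' _ ht0.le, sqrt_mul' _ hβ.le,
      sqrt_sq zero_le_two]
    exact le_mul_of_one_le_right (by positivity) (one_le_sqrt.2 ht)
  have hsβ : 0 < √β := sqrt_pos.2 hβ
  have hs_pos : 0 < s := by linarith
  set v := w / s
  have hform : gaussProfile β w t *
      (w ^ 2 / (4 * β * t ^ 2) - c * w / (2 * β * t) - 1 / (2 * t)) =
      t⁻¹ * exp (-v ^ 2) * ((v ^ 2 - 1 / 2) / s - c * v / (2 * β)) := by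
    have hw : w = v * s := (div_mul_cancel₀ w hs_pos.ne').symm
    rw [gaussProfile, ← hs_def, hw, mul_pow, ← hs2]
    field_simp
    linear_combination 2 * v ^ 2 * hs2
  have hbracket : |(v ^ 2 - 1 / 2) / s - c * v / (2 * β)| ≤
      (1 + v ^ 2) * ((1 / √β + |c| / (2 * β)) / 2) := by
    have hv : |v| ≤ (1 + v ^ 2) / 2 := by nlinarith [sq_abs v, sq_nonneg (|v| - 1)]
    have h1 : |v ^ 2 - 1 / 2| ≤ 1 + v ^ 2 := by rw [abs_le]; constructor <;> nlinarith [sq_nonneg v]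
    calc |(v ^ 2 - 1 / 2) / s - c * v / (2 * β)|
        ≤ |v ^ 2 - 1 / 2| / s + |c| * |v| / (2 * β) := by
          refine (abs_sub _ _).trans_eq ?_
          rw [abs_div, abs_div, abs_mul, abs_of_pos hs_pos, abs_of_pos (by positivity : 0 < 2 * β)]
      _ ≤ (1 + v ^ 2) / (2 * √β) + |c| * ((1 + v ^ 2) / 2) / (2 * β) := by
          gcongr
      _ = (1 + v ^ 2) * ((1 / √β + |c| / (2 * β)) / 2) := by field_simp
  rw [hform]
  calc |t⁻¹ * exp (-v ^ 2) * ((v ^ 2 - 1 / 2) / s - c * v / (2 * β))|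
      = t⁻¹ * exp (-v ^ 2) * |(v ^ 2 - 1 / 2) / s - c * v / (2 * β)| := by
        rw [abs_mul, abs_of_pos (by positivity : 0 < t⁻¹ * exp (-v ^ 2))]
    _ ≤ t⁻¹ * exp (-v ^ 2) * ((1 + v ^ 2) * ((1 / √β + |c| / (2 * β)) / 2)) := by gcongr
    _ = (1 / √β + |c| / (2 * β)) / 2 * t⁻¹ * ((1 + v ^ 2) * exp (-v ^ 2)) := by ring
    _ ≤ (1 / √β + |c| / (2 * β)) / 2 * t⁻¹ * (2 * exp (-(v ^ 2 / 2))) := by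
        gcongr ?_ * ?_
        exact one_add_mul_exp_neg_le _
    _ = (1 / √β + |c| / (2 * β)) * t⁻¹ * exp (-(w ^ 2 / (8 * β * t))) := by
        rw [div_pow, hs2]; ring_nf

theorem hasDerivAt_deriv_eKernel {a β t : ℝ} (hβ : 0 < β) (ht : 0 < t) (y : ℝ) :
    HasDerivAt (fun t' => deriv (fun y' => eKernel a β y' t') y)
      (1 / (2 * π) * (deriv (fun t => gaussProfile β (y + a * t) t) t
        - deriv (fun t => gaussProfile β (y + -a * t) t) t)) t := by
  have hplus := hasDerivAt_gaussProfile_comp hβ ht y a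
  have hminus := hasDerivAt_gaussProfile_comp hβ ht y (-a)
  rw [hplus.deriv, hminus.deriv]
  refine ((hplus.sub hminus).const_mul _).congr_of_eventuallyEq ?_
  filter_upwards [eventually_gt_nhds ht] with t' ht' using deriv_eKernel_eq_gaussProfile hβ ht' y

/-- Bound on the mixed derivative `∂_t ∂_y e_{a,β}(y,t)` for `y ≤ 0`, `t ≥ 1`. -/
theorem eKernel_deriv_yt_bound (a β : ℝ) (ha : 0 < a) (hβ : 0 < β) :
    ∃ C M : ℝ, 0 < C ∧ 0 < M ∧ ∀ y : ℝ, y ≤ 0 → ∀ t : ℝ, 1 ≤ t →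
      |deriv (fun t' => deriv (fun y' => eKernel a β y' t') y) t|
        ≤ C * t ^ (-(1:ℝ)) * Real.exp (-(y + a * t)^2 / (M * t)) := by
  set K := 1 / √β + a / (2 * β)
  refine ⟨K / π, 8 * β, by positivity, by positivity, fun y hy t ht => ?_⟩
  have ht0 : 0 < t := one_pos.trans_le ht
  have hplus := abs_deriv_gaussProfile_comp_le hβ ht y a
  have hminus := abs_deriv_gaussProfile_comp_le hβ ht y (-a)
  rw [abs_of_pos ha] at hplus
  rw [abs_neg, abs_of_pos ha] at hminus
  have hdecay : exp (-((y + -a * t) ^ 2 / (8 * β * t))) ≤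
      exp (-((y + a * t) ^ 2 / (8 * β * t))) := by
    have hsq : (y + a * t) ^ 2 ≤ (y + -a * t) ^ 2 := by nlinarith [mul_nonneg ha.le ht0.le]
    gcongr
  rw [(hasDerivAt_deriv_eKernel hβ ht0 y).deriv, rpow_neg_one, neg_div, abs_mul,
    abs_of_pos (by positivity : 0 < 1 / (2 * π))]
  calc _ ≤ 1 / (2 * π) * (K * t⁻¹ * exp (-((y + a * t) ^ 2 / (8 * β * t)))
          + K * t⁻¹ * exp (-((y + a * t) ^ 2 / (8 * β * t)))) := by
        gcongr
        exact (abs_sub _ _).trans (add_le_add hplus (hminus.trans (by gcongr)))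
    _ = K / π * t⁻¹ * exp (-((y + a * t) ^ 2 / (8 * β * t))) := by
        field_simp; ring
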